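/- Let A be an n×n subring matrix with diagonal (p^{e_1},...,p^{e_{n-1}},1) and I = {i : e_i ≠ 0}. Then for all i, j ∈ I, the entry a_{ij} is divisible by p, and moreover for every i ∈ I, every entry of the i-th column of A is divisible by p. -/

import Mathlib

def colSpan {n : ℕ} (A : Matrix (Fin n) (Fin n) ℤ) : AddSubgroup (Fin n → ℤ) :=
  AddSubgroup.closure (Set.range fun j => fun i => A i j)

def IsSubringOf {n : ℕ} (R : AddSubgroup (Fin n → ℤ)) : Prop :=
  (fun _ => (1 : ℤ)) ∈ R ∧ ∀ u v : Fin n → ℤ, u ∈ R → v ∈ R → u * v ∈ R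

def IsHNF {n : ℕ} (A : Matrix (Fin n) (Fin n) ℤ) : Prop :=
  (∀ i j : Fin n, (j : ℕ) < (i : ℕ) → A i j = 0) ∧
  (∀ i j : Fin n, (i : ℕ) < (j : ℕ) → 0 ≤ A i j ∧ A i j < A i i)

def IsSubringMatrix {n : ℕ} (A : Matrix (Fin n) (Fin n) ℤ) : Prop :=
  IsHNF A ∧ A.det ≠ 0 ∧ IsSubringOf (colSpan A)

def GenLE {n : ℕ} (R : AddSubgroup (Fin n → ℤ)) (k : ℕ) : Prop :=
  ∃ S : Finset ((Fin n → ℤ) ⧸ R), S.card ≤ k ∧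
    AddSubgroup.closure (S : Set ((Fin n → ℤ) ⧸ R)) = ⊤

def RankGe {n : ℕ} (R : AddSubgroup (Fin n → ℤ)) (k : ℕ) : Prop :=
  ∀ S : Finset ((Fin n → ℤ) ⧸ R),
    AddSubgroup.closure (S : Set ((Fin n → ℤ) ⧸ R)) = ⊤ → k ≤ S.card

def RankEq {n : ℕ} (R : AddSubgroup (Fin n → ℤ)) (k : ℕ) : Prop :=
  GenLE R k ∧ RankGe R k

/-!
Let `v` be the `j`-th column, where `p ∣ a_jj`, and suppose `s` is the lowest row with
`p ∤ v s`; triangularity forces `s < j`. Since `det A ∣ p ^ E`, the lattice contains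
`p ^ E ℤⁿ`, so it contains `v ^ E` with its entries below row `s` (all divisible by `p ^ E`)
cleared. A vector of the lattice of an upper triangular matrix that vanishes below row `s`
has its `s`-th entry divisible by `a_ss`; hence `a_ss` divides both `v s ^ E` and `p ^ E`,
so `a_ss = 1`, and the Hermite condition `0 ≤ v s < a_ss` gives `v s = 0`, a contradiction.
-/

namespace Matrix.IsUpperTriangular

variable {ι R : Type*} [Fintype ι] [LinearOrder ι] {A : Matrix ι ι R}

theorem mulVec_apply_of_forall_gt_eq_zero [NonUnitalNonAssocSemiring R]
    (hA : A.IsUpperTriangular) {x : ι → R} {t : ι} (hx : ∀ s, t < s → x s = 0) :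
    (A *ᵥ x) t = A t t * x t := by
  refine Finset.sum_eq_single t (fun s _ hst => ?_) (by simp)
  rcases hst.lt_or_gt with hst | hts
  · exact mul_eq_zero_of_left (hA hst) _
  · exact mul_eq_zero_of_right _ (hx s hts)

variable [Ring R] [NoZeroDivisors R]

theorem eq_zero_of_mulVec_eq_zero_of_gt (hA : A.IsUpperTriangular) (hd : ∀ t, A t t ≠ 0)
    {x : ι → R} {r : ι} (h : ∀ s, r < s → (A *ᵥ x) s = 0) (t : ι) (hrt : r < t) :
    x t = 0 := by
  induction t using WellFoundedGT.induction with
  | _ t ih =>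
    have hAx := h t hrt
    rw [hA.mulVec_apply_of_forall_gt_eq_zero fun s hts => ih s hts (hrt.trans hts)] at hAx
    exact (mul_eq_zero.mp hAx).resolve_left (hd t)

theorem diag_dvd_mulVec_apply (hA : A.IsUpperTriangular) (hd : ∀ t, A t t ≠ 0)
    {x : ι → R} {r : ι} (h : ∀ s, r < s → (A *ᵥ x) s = 0) : A r r ∣ (A *ᵥ x) r := by
  rw [hA.mulVec_apply_of_forall_gt_eq_zero (hA.eq_zero_of_mulVec_eq_zero_of_gt hd h)]
  exact dvd_mul_right _ _

end Matrix.IsUpperTriangular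

section colSpan

open Matrix

variable {n : ℕ} {A : Matrix (Fin n) (Fin n) ℤ}

theorem colSpan_eq_range_mulVecLin (A : Matrix (Fin n) (Fin n) ℤ) :
    colSpan A = (LinearMap.range A.mulVecLin).toAddSubgroup := by
  rw [range_mulVecLin, Submodule.span_int_eq_addSubgroupClosure]
  rfl

theorem mem_colSpan_iff {w : Fin n → ℤ} : w ∈ colSpan A ↔ ∃ x, A *ᵥ x = w := by
  rw [colSpan_eq_range_mulVecLin]
  rfl

theorem mem_colSpan_of_forall_det_dvd {u : Fin n → ℤ} (hu : ∀ t, A.det ∣ u t) :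
    u ∈ colSpan A := by
  choose y hy using hu
  refine mem_colSpan_iff.mpr ⟨A.adjugate *ᵥ y, ?_⟩
  rw [mulVec_mulVec, mul_adjugate, smul_mulVec, one_mulVec]
  exact funext fun t => (hy t).symm

theorem Matrix.IsUpperTriangular.diag_dvd_of_mem_colSpan (hA : A.IsUpperTriangular)
    (hd : ∀ t, A t t ≠ 0) {w : Fin n → ℤ} (hw : w ∈ colSpan A) {r : Fin n}
    (h : ∀ s, r < s → w s = 0) : A r r ∣ w r := by
  obtain ⟨x, rfl⟩ := mem_colSpan_iff.mp hw
  exact hA.diag_dvd_mulVec_apply hd h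

end colSpan

theorem IsSubringOf.pow_mem {n : ℕ} {R : AddSubgroup (Fin n → ℤ)} (hR : IsSubringOf R)
    {v : Fin n → ℤ} (hv : v ∈ R) (k : ℕ) : v ^ k ∈ R := by
  induction k with
  | zero => rw [pow_zero]; exact hR.1
  | succ k ih => rw [pow_succ]; exact hR.2 _ _ ih hv

namespace IsSubringMatrix

open Matrix

variable {n : ℕ} {A : Matrix (Fin n) (Fin n) ℤ}

theorem isUpperTriangular (hA : IsSubringMatrix A) : A.IsUpperTriangular :=
  fun i j h => hA.1.1 i j h

theorem diag_ne_zero (hA : IsSubringMatrix A) (t : Fin n) : A t t ≠ 0 := by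
  have hdet := hA.2.1
  rw [det_of_isUpperTriangular hA.isUpperTriangular] at hdet
  exact Finset.prod_ne_zero_iff.mp hdet t (Finset.mem_univ t)

theorem diag_dvd_det (hA : IsSubringMatrix A) (t : Fin n) : A t t ∣ A.det := by
  rw [det_of_isUpperTriangular hA.isUpperTriangular]
  exact Finset.dvd_prod_of_mem _ (Finset.mem_univ t)

theorem prime_dvd_col_of_dvd_diag (hA : IsSubringMatrix A) {p : ℤ} (hp : Prime p) {E : ℕ}
    (hdet : A.det ∣ p ^ E) {j : Fin n} (hj : p ∣ A j j) (s : Fin n) : p ∣ A s j := by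
  induction s using WellFoundedGT.induction with
  | _ s ih =>
    by_contra hs
    have hsj : s < j := by
      rcases lt_trichotomy s j with h | rfl | h
      · exact h
      · exact absurd hj hs
      · exact absurd (hA.isUpperTriangular h ▸ dvd_zero p) hs
    set v : Fin n → ℤ := fun t => A t j
    set w : Fin n → ℤ := fun t => if t ≤ s then A t j ^ E else 0
    have hw : w ∈ colSpan A := by
      have hv : v ^ E ∈ colSpan A :=
        hA.2.2.pow_mem (AddSubgroup.subset_closure ⟨j, rfl⟩) E
      have hvw : v ^ E - w ∈ colSpan A := mem_colSpan_of_forall_det_dvd fun t => by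
        by_cases hts : t ≤ s
        · simp [w, v, hts]
        · simp only [Pi.sub_apply, Pi.pow_apply, w, v, if_neg hts, sub_zero]
          exact hdet.trans (pow_dvd_pow_of_dvd (ih t (not_le.mp hts)) E)
      simpa using sub_mem hv hvw
    have hdvd : A s s ∣ A s j ^ E := by
      simpa [w] using hA.isUpperTriangular.diag_dvd_of_mem_colSpan hA.diag_ne_zero hw
        (r := s) fun t ht => by simp [w, not_le.mpr ht]
    have hunit : IsUnit (A s s) :=
      ((Prime.coprime_iff_not_dvd hp).mpr hs).pow.isUnit_of_dvd'
        ((hA.diag_dvd_det s).trans hdet) hdvd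
    obtain ⟨hnonneg, hlt⟩ := hA.1.2 s j hsj
    have hone : A s s = 1 := (Int.isUnit_iff.mp hunit).resolve_right (by omega)
    exact hs (by rw [show A s j = 0 by omega]; exact dvd_zero p)

end IsSubringMatrix

theorem subring_matrix_divisibility (n p : ℕ) (hp : p.Prime)
    (A : Matrix (Fin (n + 1)) (Fin (n + 1)) ℤ) (hA : IsSubringMatrix A)
    (e : Fin n → ℕ)
    (hdiag : ∀ i : Fin n, A i.castSucc i.castSucc = (p : ℤ) ^ e i)
    (hlast : A (Fin.last n) (Fin.last n) = 1) :
    (∀ i j : Fin n, e i ≠ 0 → e j ≠ 0 → (p : ℤ) ∣ A i.castSucc j.castSucc) ∧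
    (∀ i : Fin n, e i ≠ 0 → ∀ r : Fin (n + 1), (p : ℤ) ∣ A r i.castSucc) := by
  have hdet : A.det = (p : ℤ) ^ ∑ i, e i := by
    rw [Matrix.det_of_isUpperTriangular hA.isUpperTriangular, Fin.prod_univ_castSucc]
    simp only [hdiag, hlast, mul_one, Finset.prod_pow_eq_pow_sum]
  have hcol : ∀ i : Fin n, e i ≠ 0 → ∀ r : Fin (n + 1), (p : ℤ) ∣ A r i.castSucc :=
    fun i hi => hA.prime_dvd_col_of_dvd_diag (Nat.prime_iff_prime_int.mp hp) hdet.dvd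
      (by rw [hdiag]; exact dvd_pow_self _ hi)
  exact ⟨fun i j _ hj => hcol j hj i.castSucc, hcol⟩
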